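/- There is an absolute constant c > 0 such that the following holds. Let d+ > d− > 0 satisfy d+ − d− ≥ c√(d+ ln d+) with d+ bounded below by a sufficiently large absolute constant, let G be a locally finite graph with σ : V(G) → {±1}, let C be the core, and let v be a vertex such that G_v is a finite tree. Then for every u ∈ C_v \ {v} with h_{u→v} ≥ 1 and z = μ*_{u→v} ∈ {−1, 1}: cut(G_{u→v}, σ^{−z}_{u→v}) − cut(G_{u→v}, σ^z_{u→v}) = |Σ_{w∈∂u\{u_{↑v}}} μ*_{w→v}|. -/

import Mathlib

open Filter Topology

attribute [local instance] Classical.propDecidable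

set_option linter.unusedVariables false

noncomputable section


/-! ### Basic functions -/

/-- The clamping function `ψ` restricted to the integers. -/
def psiZ (x : ℤ) : ℤ := max (-1) (min 1 x)

/-- The threshold function `ψ̃` restricted to the integers. -/
def tpsiZ (x : ℤ) : ℤ := if x ≤ -1 then -1 else 1

/-- `p : ℤ → ℝ` represents a probability measure on `{-1, 0, 1}`. -/
def IsProbOn3 (p : ℤ → ℝ) : Prop :=
  (∀ z, 0 ≤ p z) ∧ (∀ z : ℤ, z ∉ ({-1, 0, 1} : Set ℤ) → p z = 0) ∧ p (-1) + p 0 + p 1 = 1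

/-- `p` is skewed: `p(1) ≥ 1 - d₊⁻¹⁰`. -/
def Skewed (dp : ℝ) (p : ℤ → ℝ) : Prop := 1 - (dp ^ 10)⁻¹ ≤ p 1

/-- The point mass at `1`, i.e. `(0,0,1)`. -/
def delta1 : ℤ → ℝ := fun z => if z = 1 then 1 else 0

/-! ### The operator `T` -/

/-- Convolution of two mass functions on `ℤ`. -/
def convZ (a b : ℤ → ℝ) : ℤ → ℝ := fun z => ∑' w : ℤ, a w * b (z - w)

/-- `n`-fold convolution power (distribution of a sum of `n` i.i.d. copies). -/
def convPow (a : ℤ → ℝ) : ℕ → ℤ → ℝ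
  | 0 => fun z => if z = 0 then 1 else 0
  | n + 1 => convZ (convPow a n) a

/-- Poisson mass function with mean `d`. -/
def poisP (d : ℝ) (k : ℕ) : ℝ := Real.exp (-d) * d ^ k / (Nat.factorial k)

/-- Distribution of `-η` when `η` has distribution `a`. -/
def flipM (a : ℤ → ℝ) : ℤ → ℝ := fun z => a (-z)

/-- The distribution of `Z_p = ∑_{i=1}^{γ₊} η_i - ∑_{i=γ₊+1}^{γ₊+γ₋} η_i` where the `η_i`
are i.i.d. with distribution `p` and `γ₊ ~ Po(d₊)`, `γ₋ ~ Po(d₋)` are independent. -/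
def Zdist (dp dm : ℝ) (p : ℤ → ℝ) : ℤ → ℝ := fun z =>
  ∑' k : ℕ, ∑' l : ℕ, poisP dp k * poisP dm l * convZ (convPow p k) (convPow (flipM p) l) z

/-- The operator `𝒯 = 𝒯_{d₊,d₋}`: the distribution of `ψ(Z_p)`. -/
def Twp (dp dm : ℝ) (p : ℤ → ℝ) : ℤ → ℝ := fun z =>
  if z = 1 then ∑' m : ℕ, Zdist dp dm p (1 + (m : ℤ))
  else if z = 0 then Zdist dp dm p 0
  else if z = -1 then ∑' m : ℕ, Zdist dp dm p (-1 - (m : ℤ))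
  else 0

/-- The value `Z` as a function of the outcomes `η : Fin (k+l) → ℤ`, where the first `k`
coordinates form the `γ₊`-group and the remaining `l` the `γ₋`-group. -/
def zsum (k l : ℕ) (η : Fin (k + l) → ℤ) : ℤ :=
  (∑ j ∈ Finset.univ.filter (fun j : Fin (k + l) => (j : ℕ) < k), η j)
    - ∑ j ∈ Finset.univ.filter (fun j : Fin (k + l) => k ≤ (j : ℕ)), η j

/-- Conditional expectation of
`∑_{i=1}^{γ₊} 1{η_i = -ψ̃(Z)} + ∑_{i=γ₊+1}^{γ₊+γ₋} 1{η_i = ψ̃(Z)}` given `γ₊ = k, γ₋ = l`. -/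
def innerPhi (p : ℤ → ℝ) (k l : ℕ) : ℝ :=
  ∑ η ∈ Fintype.piFinset (fun _ : Fin (k + l) => ({-1, 0, 1} : Finset ℤ)),
    (∏ i, p (η i)) *
      (((Finset.univ.filter (fun i : Fin (k + l) =>
            (i : ℕ) < k ∧ η i = - tpsiZ (zsum k l η))).card : ℝ)
        + ((Finset.univ.filter (fun i : Fin (k + l) =>
            k ≤ (i : ℕ) ∧ η i = tpsiZ (zsum k l η))).card : ℝ))

/-- The functional `φ_{d₊,d₋}`. -/
def phiOp (dp dm : ℝ) (p : ℤ → ℝ) : ℝ :=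
  (1 / 2) * ∑' k : ℕ, ∑' l : ℕ, poisP dp k * poisP dm l * innerPhi p k l

/-! ### The L¹-Wasserstein distance on measures on `{-1,0,1}` -/

/-- `ℓ₁(p,q)`: infimum of `E |X - Y|` over couplings of `p` and `q`. -/
def ell1 (p q : ℤ → ℝ) : ℝ :=
  sInf { r | ∃ ν : ℤ × ℤ → ℝ, (∀ x y, 0 ≤ ν (x, y)) ∧
    (∀ x, ∑ y ∈ ({-1, 0, 1} : Finset ℤ), ν (x, y) = p x) ∧
    (∀ y, ∑ x ∈ ({-1, 0, 1} : Finset ℤ), ν (x, y) = q y) ∧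
    r = ∑ x ∈ ({-1, 0, 1} : Finset ℤ), ∑ y ∈ ({-1, 0, 1} : Finset ℤ),
          |(x : ℝ) - (y : ℝ)| * ν (x, y) }





/-! ### Graphs: restriction, cuts, the core, Warning Propagation -/

/-- Every neighbourhood in a graph on a finite vertex type is finite. -/
noncomputable instance fintypeNeighborSet {V : Type*} [Fintype V] (G : SimpleGraph V) (v : V) :
    Fintype (G.neighborSet v) := Fintype.ofFinite _

/-- The subgraph of `G` consisting of the edges inside `S` (the induced subgraph on `S`,
viewed as a graph on the ambient vertex set; vertices outside `S` are isolated). -/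
def restrictG {V : Type*} (G : SimpleGraph V) (S : Set V) : SimpleGraph V where
  Adj x y := G.Adj x y ∧ x ∈ S ∧ y ∈ S
  symm := ⟨fun x y h => ⟨G.adj_symm h.1, h.2.2, h.2.1⟩⟩
  loopless := ⟨fun x h => G.irrefl h.1⟩

/-- `cut(G, σ)` for the boundary condition `σ` on `U`: the least number of edges of `G` joining
vertices of different colours, over all `±1`-colourings `τ` agreeing with `σ` on `U`.
(The set of ordered pairs of adjacent bichromatic vertices has twice the size of the
corresponding edge set.) -/
def cutW {V : Type*} (G : SimpleGraph V) (U : Set V) (σ : V → ℤ) : ℕ :=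
  sInf { k | ∃ τ : V → ℤ, (∀ x, τ x = 1 ∨ τ x = -1) ∧ (∀ x ∈ U, τ x = σ x) ∧
    2 * k = {p : V × V | G.Adj p.1 p.2 ∧ τ p.1 ≠ τ p.2}.ncard }

/-- The defining property of the core. -/
def CoreProp {V : Type*} (G : SimpleGraph V) (σ : V → ℤ) (dp dm c : ℝ) (U : Set V) : Prop :=
  ∀ u ∈ U,
    |(({w | G.Adj u w ∧ σ u * σ w = 1}.ncard : ℝ) - dp)| ≤ c / 4 * Real.sqrt (dp * Real.log dp) ∧
    |(({w | G.Adj u w ∧ σ u * σ w = -1}.ncard : ℝ) - dm)| ≤ c / 4 * Real.sqrt (dp * Real.log dp) ∧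
    ({w | G.Adj u w} \ U).ncard ≤ 100

/-- The core: the largest subset satisfying `CoreProp`, i.e. the union of all such subsets. -/
def coreSet {V : Type*} (G : SimpleGraph V) (σ : V → ℤ) (dp dm c : ℝ) : Set V :=
  ⋃₀ { U | CoreProp G σ dp dm c U }

/-- The sets `C_v^{(t)}`. -/
def CvStage {V : Type*} (G : SimpleGraph V) (K : Set V) (v : V) : ℕ → Set V
  | 0 => {v} ∪ {w | G.Adj v w}
  | t + 1 => CvStage G K v t ∪ ⋃ u ∈ (CvStage G K v t \ K), {w | G.Adj u w}

/-- The set `C_v = ⋃_t C_v^{(t)}`. -/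
def CvSet {V : Type*} (G : SimpleGraph V) (K : Set V) (v : V) : Set V :=
  ⋃ t, CvStage G K v t

/-- Warning Propagation messages `μ_{v→w}(t | G, σ)` with initial condition `σ` on `U`. -/
def wpMsg {V : Type*} (G : SimpleGraph V) [∀ v : V, Fintype (G.neighborSet v)]
    (U : Set V) (σ : V → ℤ) : ℕ → V → V → ℤ
  | 0, v, _ => if v ∈ U then σ v else 0
  | t + 1, v, w => psiZ (∑ u ∈ (G.neighborFinset v).erase w, wpMsg G U σ t u v)

/-- `μ_v(t|G,σ) = ∑_{w ∈ ∂v} μ_{w→v}(t|G,σ)`. -/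
def wpVal {V : Type*} (G : SimpleGraph V) [∀ v : V, Fintype (G.neighborSet v)]
    (U : Set V) (σ : V → ℤ) (t : ℕ) (v : V) : ℤ :=
  ∑ w ∈ G.neighborFinset v, wpMsg G U σ t w v

/-- The maximum distance from `w` to any vertex reachable from `w` in `G`. -/
def hgt {V : Type*} (G : SimpleGraph V) (w : V) : ℕ :=
  sSup ((G.dist w) '' { u | G.Reachable w u })

/-- `G_v`: the subgraph of `G` induced on `C_v` (ambient form). -/
def GvG {V : Type*} (G : SimpleGraph V) (K : Set V) (v : V) : SimpleGraph V :=
  restrictG G (CvSet G K v)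

/-- `w_{↑v}`: the neighbour of `w` on the path from `w` to `v` in `G_v`. -/
def parentOf {V : Type*} (G : SimpleGraph V) (K : Set V) (v w : V) : V :=
  @Classical.epsilon V ⟨v⟩ fun x =>
    (GvG G K v).Adj w x ∧ (GvG G K v).dist x v + 1 = (GvG G K v).dist w v

/-- `G_v` with the edge `{w, w_{↑v}}` removed. -/
def GdelG {V : Type*} (G : SimpleGraph V) (K : Set V) (v w : V) : SimpleGraph V :=
  (GvG G K v).deleteEdges {s(w, parentOf G K v w)}

/-- `h_{w→v}`: the maximum distance between `w` and any other vertex of `G_{w→v}`. -/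
def hdir {V : Type*} (G : SimpleGraph V) (K : Set V) (v w : V) : ℕ :=
  hgt (GdelG G K v w) w

/-- `C_{w→v}`: the vertex set of the component of `w` in `G_v` minus the edge `{w, w_{↑v}}`. -/
def Cdir {V : Type*} (G : SimpleGraph V) (K : Set V) (v w : V) : Set V :=
  { u | (GdelG G K v w).Reachable w u }

/-- `G_{w→v}`: the component of `w` in `G_v` minus the edge `{w, w_{↑v}}`. -/
def Gdir {V : Type*} (G : SimpleGraph V) (K : Set V) (v w : V) : SimpleGraph V :=
  restrictG (GdelG G K v w) (Cdir G K v w)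

/-- `h_v`: the maximum distance between `v` and any other vertex of `G_v`. -/
def hvG {V : Type*} (G : SimpleGraph V) (K : Set V) (v : V) : ℕ :=
  hgt (GvG G K v) v

/-- `μ*_{w→v} = μ_{w→w_{↑v}}(h_{w→v}+1 | G, σ)`. -/
def muStarDir {V : Type*} (G : SimpleGraph V) [∀ v : V, Fintype (G.neighborSet v)]
    (K : Set V) (σ : V → ℤ) (v w : V) : ℤ :=
  wpMsg G Set.univ σ (hdir G K v w + 1) w (parentOf G K v w)

/-- `μ*_v = μ_v(h_v+1 | G, σ)`. -/
def muStarV {V : Type*} (G : SimpleGraph V) [∀ v : V, Fintype (G.neighborSet v)]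
    (K : Set V) (σ : V → ℤ) (v : V) : ℤ :=
  wpVal G Set.univ σ (hvG G K v + 1) v

/-- The ball of radius `t` around `v` in `G`. -/
def ballSet {V : Type*} (G : SimpleGraph V) (v : V) (t : ℕ) : Set V :=
  { u | G.Reachable v u ∧ G.dist v u ≤ t }

lemma mem_ballSet_self {V : Type*} (G : SimpleGraph V) (v : V) (t : ℕ) : v ∈ ballSet G v t :=
  ⟨SimpleGraph.Reachable.refl v, by simp [SimpleGraph.dist_self]⟩

/-- `∂^t(G,r,σ) ≅ ∂^t(H,r',τ)`: a root- and label-preserving isomorphism between the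
balls of radius `t`. -/
def RootedBallIso {V W : Type*} (G : SimpleGraph V) (σ : V → ℤ) (r : V)
    (H : SimpleGraph W) (τ : W → ℤ) (r' : W) (t : ℕ) : Prop :=
  ∃ φ : (G.induce (ballSet G r t)) ≃g (H.induce (ballSet H r' t)),
    φ ⟨r, mem_ballSet_self G r t⟩ = ⟨r', mem_ballSet_self H r' t⟩ ∧
    ∀ x, τ (φ x).1 = σ x.1





/-! ### The planted bisection model -/

/-- `σ` is a balanced bipartition: the two class sizes differ by at most one. -/
def BalancedPart {n : ℕ} (σ : Fin n → Bool) : Prop :=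
  (((Finset.univ.filter (fun v => σ v = true)).card : ℤ)
    - ((Finset.univ.filter (fun v => σ v = false)).card : ℤ)).natAbs ≤ 1

/-- The number of balanced bipartitions of `Fin n`. -/
def Nbal (n : ℕ) : ℕ := (Finset.univ.filter (fun σ : Fin n → Bool => BalancedPart σ)).card

/-- The probability `p_{σ(v)σ(w)}` of the edge `{v,w}`, where `p₊ = 2d₊/n`, `p₋ = 2d₋/n`. -/
def pairProb (dp dm : ℝ) (n : ℕ) (σ : Fin n → Bool) (v w : Fin n) : ℝ :=
  if σ v = σ w then 2 * dp / n else 2 * dm / n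

/-- The probability mass of an outcome `ω = (σ, g)` of the planted bisection model
`G(n, 2d₊/n, 2d₋/n)`: `σ` is a uniformly random balanced bipartition and, independently
for each pair `v ≠ w`, the edge `{v,w}` is present with probability `p_{σ(v)σ(w)}`. -/
def pbMass (dp dm : ℝ) (n : ℕ) (ω : (Fin n → Bool) × (Fin n → Fin n → Bool)) : ℝ :=
  (if BalancedPart ω.1 ∧ (∀ v w, ω.2 v w = ω.2 w v) ∧ (∀ v, ω.2 v v = false)
    then ((Nbal n : ℝ))⁻¹ else 0) *
  ∏ p ∈ Finset.univ.filter (fun p : Fin n × Fin n => p.1 < p.2),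
    (if ω.2 p.1 p.2 = true then pairProb dp dm n ω.1 p.1 p.2
      else 1 - pairProb dp dm n ω.1 p.1 p.2)

/-- The probability of an event in the planted bisection model. -/
def pbPr (dp dm : ℝ) (n : ℕ) (A : (Fin n → Bool) × (Fin n → Fin n → Bool) → Prop) : ℝ :=
  ∑ ω ∈ Finset.univ.filter A, pbMass dp dm n ω

/-- Sign of a Boolean, as `±1`. -/
def sgnB (b : Bool) : ℤ := if b then 1 else -1

/-- The planted assignment `σ : [n] → {±1}` of an outcome. -/
def pbSigma {n : ℕ} (ω : (Fin n → Bool) × (Fin n → Fin n → Bool)) : Fin n → ℤ :=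
  fun v => sgnB (ω.1 v)

/-- The graph of an outcome. -/
def pbGraph (n : ℕ) (g : Fin n → Fin n → Bool) : SimpleGraph (Fin n) :=
  SimpleGraph.fromRel fun v w => g v w = true

/-- The minimum bisection width `bis(G)`: the least number of edges joining `S` and its
complement over all `S` with `||S| - |S̄|| ≤ 1`. -/
def bisWidth {n : ℕ} (G : SimpleGraph (Fin n)) : ℕ :=
  sInf { k | ∃ S : Finset (Fin n),
    ((S.card : ℤ) - ((n : ℤ) - (S.card : ℤ))).natAbs ≤ 1 ∧
    k = {p : Fin n × Fin n | G.Adj p.1 p.2 ∧ p.1 ∈ S ∧ p.2 ∉ S}.ncard }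

/-! ### Finite rooted typed trees and the two-type Galton–Watson tree -/

/-- Finite rooted trees whose vertices carry a type in `ℤ` (used with types `±1`). -/
inductive GWT : Type
  | node : ℤ → List GWT → GWT

instance : Inhabited GWT := ⟨.node 0 []⟩

/-- The type of the root. -/
def GWT.typeOf : GWT → ℤ
  | .node s _ => s

/-- The subtrees pending on the children of the root. -/
def GWT.childrenOf : GWT → List GWT
  | .node _ l => l

/-- Valid positions (vertices) of a tree, encoded as lists of child indices. -/
def GWT.valid : GWT → List ℕ → Prop
  | _, [] => True
  | T, i :: p => i < T.childrenOf.length ∧ GWT.valid (T.childrenOf.getD i default) p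

/-- The type of the vertex at position `q`. -/
def GWT.typeAt : GWT → List ℕ → ℤ
  | T, [] => T.typeOf
  | T, i :: p => GWT.typeAt (T.childrenOf.getD i default) p

/-- The tree as a simple graph on its set of positions. -/
def GWT.graph (T : GWT) : SimpleGraph { p : List ℕ // T.valid p } where
  Adj a b := (∃ i : ℕ, (b : List ℕ) = (a : List ℕ) ++ [i]) ∨
             (∃ i : ℕ, (a : List ℕ) = (b : List ℕ) ++ [i])
  symm := ⟨fun a b h => h.symm⟩
  loopless := ⟨fun a h => by
    rcases h with ⟨i, hi⟩ | ⟨i, hi⟩ <;>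
      · have := congrArg List.length hi
        simp at this⟩

/-- The root of the tree. -/
def GWT.root (T : GWT) : { p : List ℕ // T.valid p } := ⟨[], trivial⟩

/-- The type labelling of the vertices. -/
def GWT.lab (T : GWT) : { p : List ℕ // T.valid p } → ℤ := fun q => T.typeAt q.1

/-- The Warning Propagation message `μ_{r↑}(t)` sent by the root of a tree towards its
(imaginary) parent, when the messages are initialised with the types. -/
def GWT.rootMsg : ℕ → GWT → ℤ
  | 0, T => T.typeOf
  | t + 1, T => psiZ ((T.childrenOf.map (GWT.rootMsg t)).sum)

/-- The probability mass function of the depth-`t` truncation of the two-type Galton–Watson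
tree with root type `s`, realised as a random *ordered* tree: the root spawns `Po(d₊ + d₋)`
children, each independently of type `s` with probability `d₊/(d₊+d₋)` and of type `-s`
with probability `d₋/(d₊+d₋)`, and the subtrees pending on the children are independent
Galton–Watson trees truncated at depth `t-1`. -/
def ogwMass (dp dm : ℝ) : ℕ → ℤ → GWT → ℝ
  | 0, s, T => if T.typeOf = s ∧ T.childrenOf = [] then 1 else 0
  | t + 1, s, T =>
    if T.typeOf = s then
      Real.exp (-(dp + dm)) / (Nat.factorial T.childrenOf.length) *
        (T.childrenOf.map fun U => (if U.typeOf = s then dp else dm)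
          * ogwMass dp dm t U.typeOf U).prod
    else 0


end

/-!
Core vertices are frozen: among the other neighbours of a core vertex its own colour has a
majority of at least `c √(d₊ ln d₊) / 2 - 201 ≥ 1`, so every Warning Propagation message it sends
is its own colour. All `G`-neighbours of a non-core vertex `w` of the finite tree `G_v` lie in
`G_v`, so by induction on `h_{w→v}` the message from `w` to its parent settles after `h_{w→v} + 1`
rounds at `μ*_{w→v} = ψ(∑_y μ*_{y→v})`, over the children `y` of `w`. This applies to `u`, since
core vertices other than `v` are leaves of `G_v`.

On the cut side, the optimal cut `N_w(a)` of the branch of `w` with `w` coloured `a` is a sum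
over the children `y` of `w`: a core child is pinned to `σ(y)` and pays `1` when `σ(y) ≠ a`, a
free child takes the cheaper of `N_y(a)` and `N_y(-a) + 1`. Since
`min(A, B + 1) - min(B, A + 1) = ψ(A - B)`, induction on the height gives
`N_w(-1) - N_w(1) = ∑_y μ*_{y→v}`, and `z = ψ` of that sum turns the difference into its
absolute value.
-/

namespace SimpleGraph

variable {V : Type*} {T H : SimpleGraph V} {a b v w x y : V}

theorem IsAcyclic.eq_of_isPath (hT : T.IsAcyclic) {p q : T.Walk a b} (hp : p.IsPath)
    (hq : q.IsPath) : p = q :=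
  congrArg Subtype.val ((hT.subsingleton_path a b).elim ⟨p, hp⟩ ⟨q, hq⟩)

theorem IsAcyclic.length_eq_dist_of_isPath (hT : T.IsAcyclic) {p : T.Walk a b}
    (hp : p.IsPath) : p.length = T.dist a b := by
  obtain ⟨q, hq, hql⟩ := p.reachable.exists_path_of_dist
  rw [hT.eq_of_isPath hp hq, hql]

theorem IsAcyclic.dist_eq_of_le (hT : T.IsAcyclic) (hHT : H ≤ T) (hr : H.Reachable a b) :
    H.dist a b = T.dist a b := by
  obtain ⟨p, hp, hpl⟩ := hr.exists_path_of_dist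
  rw [← hpl, ← hT.length_eq_dist_of_isPath (hp.mapLe hHT), Walk.length_mapLe]

/-- The tree vocabulary, for a root `v` of a graph `T`: the parent of `w` is a neighbour one step
closer to `v` (a junk value when `w = v` or `w` is not connected to `v`), and the branch of `w` is
its component once the edge to the parent is cut. For `T = G_v` these are `parentOf`, `GdelG`,
`Cdir` and `Gdir` by definition. -/
noncomputable def treeParent (T : SimpleGraph V) (v w : V) : V :=
  @Classical.epsilon V ⟨v⟩ fun x => T.Adj w x ∧ T.dist x v + 1 = T.dist w v

def IsTreeChild (T : SimpleGraph V) (v w y : V) : Prop :=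
  T.Adj w y ∧ y ≠ v ∧ T.treeParent v y = w

def deleteParentEdge (T : SimpleGraph V) (v w : V) : SimpleGraph V :=
  T.deleteEdges {s(w, T.treeParent v w)}

def branch (T : SimpleGraph V) (v w : V) : Set V :=
  {x | (T.deleteParentEdge v w).Reachable w x}

def branchGraph (T : SimpleGraph V) (v w : V) : SimpleGraph V :=
  restrictG (T.deleteParentEdge v w) (T.branch v w)

theorem exists_adj_dist_add_one_eq (hw : T.Reachable w v) (hwv : w ≠ v) :
    ∃ x, T.Adj w x ∧ T.dist x v + 1 = T.dist w v := by
  obtain ⟨p, -, hpl⟩ := hw.exists_path_of_dist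
  cases p with
  | nil => exact absurd rfl hwv
  | cons h p =>
    refine ⟨_, h, le_antisymm ?_ ?_⟩
    · have := dist_le p
      rw [Walk.length_cons] at hpl
      omega
    · obtain ⟨q, hq⟩ := p.reachable.exists_walk_length_eq_dist
      simpa [hq] using dist_le (Walk.cons h q)

theorem treeParent_spec (hw : T.Reachable w v) (hwv : w ≠ v) :
    T.Adj w (T.treeParent v w) ∧ T.dist (T.treeParent v w) v + 1 = T.dist w v :=
  Classical.epsilon_spec (exists_adj_dist_add_one_eq hw hwv)

theorem adj_treeParent (hw : T.Reachable w v) (hwv : w ≠ v) : T.Adj w (T.treeParent v w) :=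
  (treeParent_spec hw hwv).1

/-- Any neighbour of `w` closer to `v` is the penultimate vertex of the path from `v` to `w`. -/
theorem IsAcyclic.eq_treeParent (hT : T.IsAcyclic) (hw : T.Reachable w v) (hwv : w ≠ v)
    (hadj : T.Adj w x) (hx : T.dist x v + 1 = T.dist w v) : x = T.treeParent v w := by
  obtain ⟨p, hp, -⟩ := hw.symm.exists_path_of_dist
  have key : ∀ x, T.Adj w x → T.dist x v + 1 = T.dist w v → x = p.penultimate := by
    intro x hadj hx
    obtain ⟨q, hq, hql⟩ := (hw.symm.trans hadj.reachable).exists_path_of_dist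
    have hwq : w ∉ q.support := fun hwq => by
      have := (dist_le (q.takeUntil w hwq)).trans (q.length_takeUntil_le_length hwq)
      rw [hql, dist_comm (u := v), dist_comm (u := v)] at this
      omega
    exact hT.eq_penultimate_of_adj_end hp hadj
      (hT.mem_support_of_ne_mem_support_of_adj_of_isPath hp hq hadj hwq)
  exact (key x hadj hx).trans (key _ (adj_treeParent hw hwv) (treeParent_spec hw hwv).2).symm

theorem IsAcyclic.treeParent_eq_of_adj (hT : T.IsAcyclic) (hadj : T.Adj y v) :
    T.treeParent v y = v :=
  (hT.eq_treeParent hadj.reachable hadj.ne hadj (by simp [dist_eq_one_iff_adj.mpr hadj])).symm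

theorem IsTreeChild.adj (h : T.IsTreeChild v w y) : T.Adj w y := h.1

theorem IsTreeChild.ne_root (h : T.IsTreeChild v w y) : y ≠ v := h.2.1

theorem IsTreeChild.treeParent_eq (h : T.IsTreeChild v w y) : T.treeParent v y = w := h.2.2

theorem IsTreeChild.reachable (hw : T.Reachable w v) (h : T.IsTreeChild v w y) :
    T.Reachable y v :=
  h.adj.symm.reachable.trans hw

theorem IsTreeChild.dist_eq (hw : T.Reachable w v) (h : T.IsTreeChild v w y) :
    T.dist y v = T.dist w v + 1 := by
  have := (treeParent_spec (h.reachable hw) h.ne_root).2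
  rw [h.treeParent_eq] at this
  omega

theorem IsTreeChild.ne_treeParent (hw : T.Reachable w v) (hwv : w ≠ v)
    (h : T.IsTreeChild v w y) : y ≠ T.treeParent v w := by
  rintro rfl
  have := (treeParent_spec hw hwv).2
  have := h.dist_eq hw
  omega

theorem IsAcyclic.eq_treeParent_or_isTreeChild (hT : T.IsAcyclic) (hw : T.Reachable w v)
    (hwv : w ≠ v) (hadj : T.Adj w y) : y = T.treeParent v w ∨ T.IsTreeChild v w y := by
  rcases hT.dist_eq_dist_add_one_of_adj_of_reachable v hadj hw.symm with h | h
  · left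
    refine hT.eq_treeParent hw hwv hadj ?_
    rw [dist_comm (u := y), dist_comm (u := w)]
    omega
  · have hyv : y ≠ v := by
      rintro rfl
      simp at h
    right
    refine ⟨hadj, hyv, (hT.eq_treeParent (hadj.symm.reachable.trans hw) hyv hadj.symm ?_).symm⟩
    rw [dist_comm (u := w), dist_comm (u := y)]
    omega

theorem deleteParentEdge_adj :
    (T.deleteParentEdge v w).Adj a b ↔ T.Adj a b ∧ s(a, b) ≠ s(w, T.treeParent v w) := by
  rw [deleteParentEdge, deleteEdges_adj, Set.mem_singleton_iff]

theorem deleteParentEdge_le : T.deleteParentEdge v w ≤ T := deleteEdges_le _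

theorem mem_branch_self : w ∈ T.branch v w := Reachable.refl w

theorem branch_subset {S : Set V} (hS : ∀ a b, T.Adj a b → a ∈ S) (hw : w ∈ S) :
    T.branch v w ⊆ S := by
  rintro x ⟨p⟩
  match p.reverse with
  | .nil => exact hw
  | .cons h _ => exact hS _ _ (deleteParentEdge_le h)

theorem IsAcyclic.isTreeChild_of_deleteParentEdge_adj (hT : T.IsAcyclic) (hw : T.Reachable w v)
    (hwv : w ≠ v) (h : (T.deleteParentEdge v w).Adj w y) : T.IsTreeChild v w y := by
  obtain ⟨hadj, hne⟩ := deleteParentEdge_adj.mp h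
  exact (hT.eq_treeParent_or_isTreeChild hw hwv hadj).resolve_left (by rintro rfl; exact hne rfl)

theorem IsTreeChild.deleteParentEdge_adj (hw : T.Reachable w v) (hwv : w ≠ v)
    (h : T.IsTreeChild v w y) : (T.deleteParentEdge v w).Adj w y := by
  refine SimpleGraph.deleteParentEdge_adj.mpr ⟨h.adj, fun he => ?_⟩
  rcases Sym2.eq_iff.mp he with ⟨-, hy⟩ | ⟨hy, -⟩
  · exact h.ne_treeParent hw hwv hy
  · exact (adj_treeParent hw hwv).ne hy

theorem IsTreeChild.mem_branch (hw : T.Reachable w v) (hwv : w ≠ v)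
    (h : T.IsTreeChild v w y) : y ∈ T.branch v w :=
  (h.deleteParentEdge_adj hw hwv).reachable

theorem IsAcyclic.treeParent_not_mem_branch (hT : T.IsAcyclic) (hw : T.Reachable w v)
    (hwv : w ≠ v) : T.treeParent v w ∉ T.branch v w :=
  isBridge_iff.mp (isAcyclic_iff_forall_adj_isBridge.mp hT (adj_treeParent hw hwv))

theorem IsAcyclic.not_mem_branch_of_isTreeChild (hT : T.IsAcyclic) (hw : T.Reachable w v)
    (h : T.IsTreeChild v w y) : w ∉ T.branch v y := by
  simpa [h.treeParent_eq] using hT.treeParent_not_mem_branch (h.reachable hw) h.ne_root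

theorem mem_branch_of_mem_support {p : (T.deleteParentEdge v w).Walk w x} (ha : a ∈ p.support) :
    a ∈ T.branch v w :=
  ⟨p.takeUntil a ha⟩

theorem deleteParentEdge_adj_of_ne (hab : T.Adj a b) (hz : x ∈ s(w, T.treeParent v w))
    (ha : a ≠ x) (hb : b ≠ x) : (T.deleteParentEdge v w).Adj a b := by
  refine deleteParentEdge_adj.mpr ⟨hab, fun he => ?_⟩
  rw [← he, Sym2.mem_iff] at hz
  rcases hz with rfl | rfl
  exacts [ha rfl, hb rfl]

theorem reachable_deleteParentEdge_of_not_mem_support {p : T.Walk a b}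
    (hz : x ∈ s(w, T.treeParent v w)) (hp : x ∉ p.support) :
    (T.deleteParentEdge v w).Reachable a b :=
  ⟨p.toDeleteEdges _ fun e he hes => by
    rw [Set.mem_singleton_iff] at hes
    exact hp (Walk.mem_support_of_mem_edges he (hes ▸ hz))⟩

theorem IsAcyclic.branch_subset_of_isTreeChild (hT : T.IsAcyclic) (hw : T.Reachable w v)
    (hwv : w ≠ v) (h : T.IsTreeChild v w y) : T.branch v y ⊆ T.branch v w := by
  rintro x ⟨p⟩
  have hwp : w ∉ (p.mapLe deleteParentEdge_le).support := by
    rw [Walk.support_mapLe_eq_support]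
    exact fun hwp => hT.not_mem_branch_of_isTreeChild hw h (mem_branch_of_mem_support hwp)
  exact (h.deleteParentEdge_adj hw hwv).reachable.trans
    (reachable_deleteParentEdge_of_not_mem_support (Sym2.mem_mk_left _ _) hwp)

theorem IsAcyclic.exists_isTreeChild_mem_branch (hT : T.IsAcyclic) (hw : T.Reachable w v)
    (hwv : w ≠ v) (hx : x ∈ T.branch v w) (hxw : x ≠ w) :
    ∃ y, T.IsTreeChild v w y ∧ x ∈ T.branch v y := by
  obtain ⟨p, hp, -⟩ := hx.exists_path_of_dist
  cases p with
  | nil => exact absurd rfl hxw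
  | cons hadj p =>
    have hy := hT.isTreeChild_of_deleteParentEdge_adj hw hwv hadj
    refine ⟨_, hy, reachable_deleteParentEdge_of_not_mem_support (x := w)
      (p := p.mapLe deleteParentEdge_le) ?_ ?_⟩
    · rw [hy.treeParent_eq]
      exact Sym2.mem_mk_right _ _
    · rw [Walk.support_mapLe_eq_support]
      exact ((Walk.cons_isPath_iff _ _).mp hp).2

theorem IsAcyclic.eq_of_mem_branch_of_isTreeChild (hT : T.IsAcyclic) (hw : T.Reachable w v)
    {y₁ y₂ : V} (h₁ : T.IsTreeChild v w y₁) (h₂ : T.IsTreeChild v w y₂)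
    (hx₁ : x ∈ T.branch v y₁) (hx₂ : x ∈ T.branch v y₂) : y₁ = y₂ := by
  by_contra hne
  obtain ⟨q₁⟩ := hx₁
  obtain ⟨q₂⟩ := hx₂
  let W := (q₁.mapLe deleteParentEdge_le).append (q₂.mapLe deleteParentEdge_le).reverse
  have hpath : (Walk.cons h₁.adj.symm (Walk.cons h₂.adj Walk.nil)).IsPath := by
    simp [h₁.adj.ne', h₂.adj.ne, hne]
  have hwW : w ∈ W.support := by
    apply W.support_bypass_subset_support
    rw [hT.eq_of_isPath W.bypass_isPath hpath]
    simp
  rw [Walk.mem_support_append_iff, Walk.support_reverse, List.mem_reverse,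
    Walk.support_mapLe_eq_support, Walk.support_mapLe_eq_support] at hwW
  rcases hwW with hw₁ | hw₂
  · exact hT.not_mem_branch_of_isTreeChild hw h₁ (mem_branch_of_mem_support hw₁)
  · exact hT.not_mem_branch_of_isTreeChild hw h₂ (mem_branch_of_mem_support hw₂)

theorem IsAcyclic.branchGraph_adj_iff (hT : T.IsAcyclic) (hw : T.Reachable w v) (hwv : w ≠ v) :
    (T.branchGraph v w).Adj a b ↔
      (a = w ∧ T.IsTreeChild v w b) ∨ (b = w ∧ T.IsTreeChild v w a) ∨
        ∃ y, T.IsTreeChild v w y ∧ (T.branchGraph v y).Adj a b := by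
  constructor
  · rintro ⟨hab, ha, hb⟩
    by_cases haw : a = w
    · subst haw
      exact Or.inl ⟨rfl, hT.isTreeChild_of_deleteParentEdge_adj hw hwv hab⟩
    by_cases hbw : b = w
    · subst hbw
      exact Or.inr (Or.inl ⟨rfl, hT.isTreeChild_of_deleteParentEdge_adj hw hwv hab.symm⟩)
    obtain ⟨y, hy, hay⟩ := hT.exists_isTreeChild_mem_branch hw hwv ha haw
    have hab' : (T.deleteParentEdge v y).Adj a b :=
      deleteParentEdge_adj_of_ne (deleteParentEdge_le hab)
        (by rw [hy.treeParent_eq]; exact Sym2.mem_mk_right _ _) haw hbw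
    exact Or.inr (Or.inr ⟨y, hy, hab', hay, hay.trans hab'.reachable⟩)
  · rintro (⟨rfl, hb⟩ | ⟨rfl, ha⟩ | ⟨y, hy, hab, ha, hb⟩)
    · exact ⟨hb.deleteParentEdge_adj hw hwv, mem_branch_self, hb.mem_branch hw hwv⟩
    · exact ⟨(ha.deleteParentEdge_adj hw hwv).symm, ha.mem_branch hw hwv, mem_branch_self⟩
    · have hwy := hT.not_mem_branch_of_isTreeChild hw hy
      refine ⟨deleteParentEdge_adj_of_ne (deleteParentEdge_le hab) (Sym2.mem_mk_left _ _)
        (by rintro rfl; exact hwy ha) (by rintro rfl; exact hwy hb), ?_, ?_⟩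
      · exact hT.branch_subset_of_isTreeChild hw hwv hy ha
      · exact hT.branch_subset_of_isTreeChild hw hwv hy hb

theorem IsAcyclic.dist_eq_dist_add_one_of_mem_branch (hT : T.IsAcyclic) (hw : T.Reachable w v)
    (h : T.IsTreeChild v w y) (hx : x ∈ T.branch v y) : T.dist w x = T.dist y x + 1 := by
  obtain ⟨q, hq, -⟩ := hx.exists_path_of_dist
  have hwq : w ∉ (q.mapLe deleteParentEdge_le).support := by
    rw [Walk.support_mapLe_eq_support]
    exact fun hwq => hT.not_mem_branch_of_isTreeChild hw h (mem_branch_of_mem_support hwq)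
  have hpath := (Walk.cons_isPath_iff h.adj _).mpr ⟨hq.mapLe deleteParentEdge_le, hwq⟩
  rw [← hT.length_eq_dist_of_isPath hpath, ← hT.length_eq_dist_of_isPath
    (hq.mapLe deleteParentEdge_le), Walk.length_cons]

theorem IsAcyclic.hgt_deleteParentEdge_lt (hT : T.IsAcyclic) (hw : T.Reachable w v)
    (hwv : w ≠ v) (hfin : (T.branch v w).Finite) (h : T.IsTreeChild v w y) :
    hgt (T.deleteParentEdge v y) y < hgt (T.deleteParentEdge v w) w := by
  have hsub := hT.branch_subset_of_isTreeChild hw hwv h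
  obtain ⟨x, hx, hxy⟩ : hgt (T.deleteParentEdge v y) y ∈
      (T.deleteParentEdge v y).dist y '' T.branch v y :=
    Set.Nonempty.csSup_mem ⟨_, Set.mem_image_of_mem _ mem_branch_self⟩
      ((hfin.subset hsub).image _)
  have hle : (T.deleteParentEdge v w).dist w x ≤ hgt (T.deleteParentEdge v w) w :=
    le_csSup (hfin.image _).bddAbove (Set.mem_image_of_mem _ (hsub hx))
  rw [← hxy, hT.dist_eq_of_le deleteParentEdge_le hx]
  rw [hT.dist_eq_of_le deleteParentEdge_le (hsub hx),
    hT.dist_eq_dist_add_one_of_mem_branch hw h hx] at hle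
  omega

theorem IsAcyclic.exists_isTreeChild_of_hgt_pos (hT : T.IsAcyclic) (hw : T.Reachable w v)
    (hwv : w ≠ v) (h : 0 < hgt (T.deleteParentEdge v w) w) : ∃ y, T.IsTreeChild v w y := by
  by_contra! hleaf
  have hbranch : T.branch v w = {w} := by
    refine Set.eq_singleton_iff_unique_mem.mpr ⟨mem_branch_self, fun x hx => ?_⟩
    by_contra hxw
    obtain ⟨y, hy, -⟩ := hT.exists_isTreeChild_mem_branch hw hwv hx hxw
    exact hleaf y hy
  rw [hgt, show {u | (T.deleteParentEdge v w).Reachable w u} = T.branch v w from rfl, hbranch,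
    Set.image_singleton, dist_self, csSup_singleton] at h
  exact h.false

end SimpleGraph

section Cut

variable {V : Type*} {H : SimpleGraph V} {U : Set V} {σ τ : V → ℤ}

def cutPairs (H : SimpleGraph V) (τ : V → ℤ) : Set (V × V) :=
  {p | H.Adj p.1 p.2 ∧ τ p.1 ≠ τ p.2}

/-- Swapping the coordinates is a fixed-point-free involution of the cut pairs. -/
theorem even_ncard_cutPairs (hfin : (cutPairs H τ).Finite) : Even (cutPairs H τ).ncard := by
  rw [Set.ncard_eq_toFinset_card _ hfin, ← ZMod.natCast_eq_zero_iff_even, Finset.cast_card]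
  refine Finset.sum_involution (fun p _ => p.swap) (fun _ _ => by decide)
    (fun p hp _ h => ?_) (fun p hp => ?_) (fun p _ => p.swap_swap)
  · rw [Set.Finite.mem_toFinset] at hp
    exact hp.1.ne (congrArg Prod.snd h)
  · rw [Set.Finite.mem_toFinset] at hp ⊢
    exact ⟨hp.1.symm, hp.2.symm⟩

theorem cutW_le (hτ : ∀ x, τ x = 1 ∨ τ x = -1) (hU : ∀ x ∈ U, τ x = σ x) {k : ℕ}
    (hk : 2 * k = (cutPairs H τ).ncard) : cutW H U σ ≤ k :=
  Nat.sInf_le ⟨τ, hτ, hU, hk⟩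

theorem two_mul_cutW_le (hfin : (cutPairs H τ).Finite) (hτ : ∀ x, τ x = 1 ∨ τ x = -1)
    (hU : ∀ x ∈ U, τ x = σ x) : 2 * cutW H U σ ≤ (cutPairs H τ).ncard := by
  obtain ⟨k, hk⟩ := even_ncard_cutPairs hfin
  have := cutW_le (H := H) hτ hU (k := k) (by omega)
  omega

theorem exists_two_mul_cutW_eq (hσ : ∀ x, σ x = 1 ∨ σ x = -1)
    (hfin : ∀ τ, (cutPairs H τ).Finite) :
    ∃ τ : V → ℤ, (∀ x, τ x = 1 ∨ τ x = -1) ∧ (∀ x ∈ U, τ x = σ x) ∧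
      2 * cutW H U σ = (cutPairs H τ).ncard := by
  obtain ⟨k, hk⟩ := even_ncard_cutPairs (hfin σ)
  exact Nat.sInf_mem (s := {k | ∃ τ : V → ℤ, (∀ x, τ x = 1 ∨ τ x = -1) ∧
    (∀ x ∈ U, τ x = σ x) ∧ 2 * k = (cutPairs H τ).ncard}) ⟨k, σ, hσ, fun _ _ => rfl, by omega⟩

end Cut

section BranchCut

open SimpleGraph

variable {V : Type*} {T : SimpleGraph V} {K : Set V} {σ τ : V → ℤ} {v w y : V} {a : ℤ}

/-- `cut(G_{w→v}, σ^a_{w→v})` in the notation of the paper, for `T = G_v`. -/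
noncomputable def branchCut (T : SimpleGraph V) (K : Set V) (σ : V → ℤ) (v w : V) (a : ℤ) : ℕ :=
  cutW (T.branchGraph v w) (T.branch v w ∩ ({w} ∪ K)) (fun x => if x = w then a else σ x)

def IsBranchColoring (T : SimpleGraph V) (K : Set V) (σ : V → ℤ) (v w : V) (a : ℤ)
    (τ : V → ℤ) : Prop :=
  (∀ x, τ x = 1 ∨ τ x = -1) ∧ ∀ x ∈ T.branch v w ∩ ({w} ∪ K), τ x = if x = w then a else σ x

/-- The cost of the branch of the child `y` when the parent of `y` is coloured `a`. -/
noncomputable def childCost (T : SimpleGraph V) (K : Set V) (σ : V → ℤ) (v y : V) (a : ℤ) : ℕ :=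
  if y ∈ K then branchCut T K σ v y (σ y) + (if σ y ≠ a then 1 else 0)
  else min (branchCut T K σ v y a) (branchCut T K σ v y (-a) + 1)

theorem IsBranchColoring.apply_self (hτ : IsBranchColoring T K σ v w a τ) : τ w = a := by
  simpa using hτ.2 w ⟨mem_branch_self, Or.inl rfl⟩

theorem cutPairs_branchGraph_subset :
    cutPairs (T.branchGraph v w) τ ⊆ T.branch v w ×ˢ T.branch v w :=
  fun _ hp => ⟨hp.1.2.1, hp.1.2.2⟩

theorem cutPairs_branchGraph_finite (hfin : (T.branch v w).Finite) :
    (cutPairs (T.branchGraph v w) τ).Finite :=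
  (hfin.prod hfin).subset cutPairs_branchGraph_subset

theorem two_mul_branchCut_le (hfin : (T.branch v w).Finite)
    (hτ : IsBranchColoring T K σ v w a τ) :
    2 * branchCut T K σ v w a ≤ (cutPairs (T.branchGraph v w) τ).ncard :=
  two_mul_cutW_le (cutPairs_branchGraph_finite hfin) hτ.1 hτ.2

theorem exists_two_mul_branchCut_eq (hfin : (T.branch v w).Finite)
    (hσ : ∀ x, σ x = 1 ∨ σ x = -1) (ha : a = 1 ∨ a = -1) :
    ∃ τ, IsBranchColoring T K σ v w a τ ∧
      2 * branchCut T K σ v w a = (cutPairs (T.branchGraph v w) τ).ncard := by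
  obtain ⟨τ, h1, h2, h3⟩ := exists_two_mul_cutW_eq (U := T.branch v w ∩ ({w} ∪ K))
    (σ := fun x => if x = w then a else σ x) (fun x => by split_ifs <;> simp [ha, hσ x])
    (fun _ => cutPairs_branchGraph_finite hfin)
  exact ⟨τ, ⟨h1, h2⟩, h3⟩

theorem IsBranchColoring.of_isTreeChild (hT : T.IsAcyclic) (hw : T.Reachable w v)
    (hwv : w ≠ v) (hτ : IsBranchColoring T K σ v w a τ) (hy : T.IsTreeChild v w y) :
    IsBranchColoring T K σ v y (τ y) τ := by
  refine ⟨hτ.1, fun x ⟨hx, hxK⟩ => ?_⟩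
  split_ifs with hxy
  · rw [hxy]
  · have hxw : x ≠ w := by
      rintro rfl
      exact hT.not_mem_branch_of_isTreeChild hw hy hx
    have := hτ.2 x ⟨hT.branch_subset_of_isTreeChild hw hwv hy hx,
      Or.inr (hxK.resolve_left hxy)⟩
    rwa [if_neg hxw] at this

theorem SimpleGraph.IsAcyclic.cutPairs_branchGraph_eq (hT : T.IsAcyclic) (hw : T.Reachable w v)
    (hwv : w ≠ v) {s : Finset V} (hs : ∀ y, y ∈ s ↔ T.IsTreeChild v w y) :
    cutPairs (T.branchGraph v w) τ =
      ↑((s.filter (τ · ≠ τ w)) ×ˢ {w} ∪ {w} ×ˢ (s.filter (τ · ≠ τ w))) ∪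
        ⋃ y ∈ s, cutPairs (T.branchGraph v y) τ := by
  ext ⟨a, b⟩
  simp only [cutPairs, Set.mem_ofPred_eq, hT.branchGraph_adj_iff hw hwv, Finset.coe_union,
    Finset.coe_product, Finset.coe_filter, Finset.coe_singleton, Set.mem_union, Set.mem_prod,
    Set.mem_singleton_iff, Set.mem_iUnion, hs, exists_prop]
  constructor
  · rintro ⟨⟨rfl, hb⟩ | ⟨rfl, ha⟩ | ⟨y, hy, hab⟩, hne⟩
    · exact Or.inl (Or.inr ⟨rfl, hb, Ne.symm hne⟩)
    · exact Or.inl (Or.inl ⟨⟨ha, hne⟩, rfl⟩)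
    · exact Or.inr ⟨y, hy, hab, hne⟩
  · rintro ((⟨⟨ha, hne⟩, rfl⟩ | ⟨rfl, hb, hne⟩) | ⟨y, hy, hab, hne⟩)
    · exact ⟨Or.inr (Or.inl ⟨rfl, ha⟩), hne⟩
    · exact ⟨Or.inl ⟨rfl, hb⟩, Ne.symm hne⟩
    · exact ⟨Or.inr (Or.inr ⟨y, hy, hab⟩), hne⟩

theorem SimpleGraph.IsAcyclic.pairwiseDisjoint_cutPairs_branchGraph (hT : T.IsAcyclic)
    (hw : T.Reachable w v) {s : Finset V} (hs : ∀ y, y ∈ s ↔ T.IsTreeChild v w y) :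
    (s : Set V).PairwiseDisjoint fun y => cutPairs (T.branchGraph v y) τ :=
  fun y₁ hy₁ y₂ hy₂ hne => Set.disjoint_left.mpr fun _ hp₁ hp₂ => hne <|
    hT.eq_of_mem_branch_of_isTreeChild hw ((hs y₁).mp hy₁) ((hs y₂).mp hy₂) hp₁.1.2.1 hp₂.1.2.1

theorem SimpleGraph.IsAcyclic.ncard_cutPairs_branchGraph (hT : T.IsAcyclic)
    (hw : T.Reachable w v) (hwv : w ≠ v) (hfin : (T.branch v w).Finite) {s : Finset V}
    (hs : ∀ y, y ∈ s ↔ T.IsTreeChild v w y) :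
    (cutPairs (T.branchGraph v w) τ).ncard =
      2 * (s.filter (τ · ≠ τ w)).card + ∑ y ∈ s, (cutPairs (T.branchGraph v y) τ).ncard := by
  set t := s.filter (τ · ≠ τ w)
  have hfin_child : ∀ y ∈ s, (cutPairs (T.branchGraph v y) τ).Finite := fun y hy =>
    cutPairs_branchGraph_finite
      (hfin.subset (hT.branch_subset_of_isTreeChild hw hwv ((hs y).mp hy)))
  have hdisj_root : Disjoint (t ×ˢ {w}) ({w} ×ˢ t) := by
    refine Finset.disjoint_left.mpr fun p h₁ h₂ => ?_
    rw [Finset.mem_product, Finset.mem_singleton] at h₁ h₂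
    have hwt : w ∈ t := h₂.1 ▸ h₁.1
    exact (Finset.mem_filter.mp hwt).2 rfl
  have hdisj : Disjoint (↑(t ×ˢ {w} ∪ {w} ×ˢ t) : Set (V × V))
      (⋃ y ∈ s, cutPairs (T.branchGraph v y) τ) := by
    refine Set.disjoint_left.mpr fun p hroot hp => ?_
    obtain ⟨y, hy, hpy⟩ := Set.mem_iUnion₂.mp hp
    have hwy := hT.not_mem_branch_of_isTreeChild hw ((hs y).mp hy)
    simp only [Finset.coe_union, Finset.coe_product, Finset.coe_singleton, Set.mem_union,
      Set.mem_prod, Set.mem_singleton_iff] at hroot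
    rcases hroot with ⟨-, hp₂⟩ | ⟨hp₁, -⟩
    exacts [hwy (hp₂ ▸ hpy.1.2.2), hwy (hp₁ ▸ hpy.1.2.1)]
  rw [hT.cutPairs_branchGraph_eq hw hwv hs, Set.ncard_union_eq hdisj (Finset.finite_toSet _)
    (s.finite_toSet.biUnion hfin_child), Set.ncard_coe_finset,
    Finset.card_union_of_disjoint hdisj_root, ← Finset.set_biUnion_coe,
    s.finite_toSet.ncard_biUnion hfin_child (hT.pairwiseDisjoint_cutPairs_branchGraph hw hs),
    finsum_mem_coe_finset, Finset.card_product, Finset.card_product, Finset.card_singleton]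
  ring

theorem childCost_le (ha : a = 1 ∨ a = -1) {b : ℤ} (hb : b = 1 ∨ b = -1)
    (hbK : y ∈ K → b = σ y) :
    childCost T K σ v y a ≤ branchCut T K σ v y b + if b ≠ a then 1 else 0 := by
  unfold childCost
  by_cases hy : y ∈ K
  · rw [if_pos hy, hbK hy]
  · rw [if_neg hy]
    rcases ha with rfl | rfl <;> rcases hb with rfl | rfl <;> simp

theorem exists_childCost_eq (ha : a = 1 ∨ a = -1) (hσy : σ y = 1 ∨ σ y = -1) :
    ∃ b, (b = 1 ∨ b = -1) ∧ (y ∈ K → b = σ y) ∧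
      childCost T K σ v y a = branchCut T K σ v y b + if b ≠ a then 1 else 0 := by
  unfold childCost
  by_cases hy : y ∈ K
  · exact ⟨σ y, hσy, fun _ => rfl, by rw [if_pos hy]⟩
  · rw [if_neg hy]
    rcases le_total (branchCut T K σ v y a) (branchCut T K σ v y (-a) + 1) with h | h
    · exact ⟨a, ha, fun h => absurd h hy, by simp [min_eq_left h]⟩
    · refine ⟨-a, by omega, fun h => absurd h hy, ?_⟩
      rw [min_eq_right h, if_pos (by omega)]

/-- Branches of distinct children are disjoint, so colourings of them glue together. -/
theorem SimpleGraph.IsAcyclic.exists_isBranchColoring_eq_of_mem_branch (hT : T.IsAcyclic)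
    (hw : T.Reachable w v) (hwv : w ≠ v) {s : Finset V} (hs : ∀ y, y ∈ s ↔ T.IsTreeChild v w y)
    (ha : a = 1 ∨ a = -1) (τf : V → V → ℤ)
    (hτf : ∀ y ∈ s, IsBranchColoring T K σ v y (τf y y) (τf y))
    (hτfK : ∀ y ∈ s, y ∈ K → τf y y = σ y) :
    ∃ τ, IsBranchColoring T K σ v w a τ ∧ ∀ y ∈ s, ∀ x ∈ T.branch v y, τ x = τf y x := by
  let τ x := if h : ∃ y ∈ s, x ∈ T.branch v y then τf h.choose x else a
  have hglue : ∀ y ∈ s, ∀ x ∈ T.branch v y, τ x = τf y x := by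
    intro y hy x hx
    have h : ∃ y ∈ s, x ∈ T.branch v y := ⟨y, hy, hx⟩
    have hchoose : h.choose = y := hT.eq_of_mem_branch_of_isTreeChild hw
      ((hs _).mp h.choose_spec.1) ((hs y).mp hy) h.choose_spec.2 hx
    simp only [τ, dif_pos h, hchoose]
  refine ⟨τ, ⟨fun x => ?_, fun x ⟨hx, hxK⟩ => ?_⟩, hglue⟩
  · by_cases h : ∃ y ∈ s, x ∈ T.branch v y
    · rw [hglue _ h.choose_spec.1 _ h.choose_spec.2]
      exact (hτf _ h.choose_spec.1).1 x
    · simpa only [τ, dif_neg h] using ha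
  · by_cases hxw : x = w
    · subst hxw
      have h : ¬∃ y ∈ s, x ∈ T.branch v y := fun ⟨y, hy, hxy⟩ =>
        hT.not_mem_branch_of_isTreeChild hw ((hs y).mp hy) hxy
      simp only [τ, dif_neg h, if_true]
    · obtain ⟨y, hy, hxy⟩ := hT.exists_isTreeChild_mem_branch hw hwv hx hxw
      have hxK : x ∈ K := hxK.resolve_left hxw
      rw [if_neg hxw, hglue y ((hs y).mpr hy) x hxy,
        (hτf y ((hs y).mpr hy)).2 x ⟨hxy, Or.inr hxK⟩]
      split_ifs with hxy'
      · subst hxy'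
        exact hτfK x ((hs x).mpr hy) hxK
      · rfl

theorem SimpleGraph.IsAcyclic.sum_childCost_le_branchCut (hT : T.IsAcyclic)
    (hw : T.Reachable w v) (hwv : w ≠ v) (hfin : (T.branch v w).Finite) {s : Finset V}
    (hs : ∀ y, y ∈ s ↔ T.IsTreeChild v w y) (hσ : ∀ x, σ x = 1 ∨ σ x = -1)
    (ha : a = 1 ∨ a = -1) :
    ∑ y ∈ s, childCost T K σ v y a ≤ branchCut T K σ v w a := by
  obtain ⟨τ, hτ, hcut⟩ := exists_two_mul_branchCut_eq (K := K) hfin hσ ha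
  have hchild : ∀ y ∈ s, 2 * childCost T K σ v y a ≤
      2 * (if τ y ≠ τ w then 1 else 0) + (cutPairs (T.branchGraph v y) τ).ncard := by
    intro y hy
    have hy' := (hs y).mp hy
    have hcost := childCost_le (T := T) (K := K) (σ := σ) (v := v) ha (hτ.1 y) fun hyK => by
      simpa [hy'.adj.ne'] using hτ.2 y ⟨hy'.mem_branch hw hwv, Or.inr hyK⟩
    have hcut_y := two_mul_branchCut_le
      (hfin.subset (hT.branch_subset_of_isTreeChild hw hwv hy'))
      (hτ.of_isTreeChild hT hw hwv hy')
    rw [hτ.apply_self]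
    omega
  have hsum := Finset.sum_le_sum hchild
  rw [Finset.sum_add_distrib, ← Finset.mul_sum, ← Finset.mul_sum, ← Finset.card_filter,
    ← hT.ncard_cutPairs_branchGraph hw hwv hfin hs, ← hcut] at hsum
  omega

theorem SimpleGraph.IsAcyclic.branchCut_le_sum_childCost (hT : T.IsAcyclic)
    (hw : T.Reachable w v) (hwv : w ≠ v) (hfin : (T.branch v w).Finite) {s : Finset V}
    (hs : ∀ y, y ∈ s ↔ T.IsTreeChild v w y) (hσ : ∀ x, σ x = 1 ∨ σ x = -1)
    (ha : a = 1 ∨ a = -1) :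
    branchCut T K σ v w a ≤ ∑ y ∈ s, childCost T K σ v y a := by
  choose b hb hbK hcost using fun y => exists_childCost_eq (T := T) (K := K) (v := v) ha (hσ y)
  choose! τf hτf hcut using fun y (hy : y ∈ s) => exists_two_mul_branchCut_eq (K := K)
    (hfin.subset (hT.branch_subset_of_isTreeChild hw hwv ((hs y).mp hy))) hσ (hb y)
  obtain ⟨τ, hτ, hglue⟩ := hT.exists_isBranchColoring_eq_of_mem_branch hw hwv hs ha τf
    (fun y hy => (hτf y hy).apply_self ▸ hτf y hy)
    (fun y hy hyK => by rw [(hτf y hy).apply_self, hbK y hyK])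
  have hterm : ∀ y ∈ s, 2 * (if τ y ≠ τ w then 1 else 0) +
      (cutPairs (T.branchGraph v y) τ).ncard = 2 * childCost T K σ v y a := by
    intro y hy
    have hpairs : cutPairs (T.branchGraph v y) τ = cutPairs (T.branchGraph v y) (τf y) := by
      ext p
      refine and_congr_right fun hp => ?_
      rw [hglue y hy _ hp.2.1, hglue y hy _ hp.2.2]
    rw [hpairs, ← hcut y hy, hcost, hτ.apply_self, hglue y hy y mem_branch_self,
      (hτf y hy).apply_self]
    ring
  have := two_mul_branchCut_le hfin hτ
  rw [hT.ncard_cutPairs_branchGraph hw hwv hfin hs, Finset.card_filter, Finset.mul_sum,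
    ← Finset.sum_add_distrib, Finset.sum_congr rfl hterm, ← Finset.mul_sum] at this
  omega

theorem SimpleGraph.IsAcyclic.branchCut_eq_sum_childCost (hT : T.IsAcyclic)
    (hw : T.Reachable w v) (hwv : w ≠ v) (hfin : (T.branch v w).Finite) {s : Finset V}
    (hs : ∀ y, y ∈ s ↔ T.IsTreeChild v w y) (hσ : ∀ x, σ x = 1 ∨ σ x = -1)
    (ha : a = 1 ∨ a = -1) :
    branchCut T K σ v w a = ∑ y ∈ s, childCost T K σ v y a :=
  le_antisymm (hT.branchCut_le_sum_childCost hw hwv hfin hs hσ ha)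
    (hT.sum_childCost_le_branchCut hw hwv hfin hs hσ ha)

theorem childCost_neg_one_sub_childCost_one (hσy : σ y = 1 ∨ σ y = -1) :
    (childCost T K σ v y (-1) : ℤ) - childCost T K σ v y 1 =
      if y ∈ K then σ y else psiZ (branchCut T K σ v y (-1) - branchCut T K σ v y 1) := by
  unfold childCost psiZ
  split_ifs <;> push_cast <;> omega

end BranchCut

section CoreMessages

theorem abs_psiZ_le (z : ℤ) : |psiZ z| ≤ 1 := by
  unfold psiZ
  rw [abs_le]
  omega

theorem psiZ_eq_of_one_le_mul {s z : ℤ} (hs : s = 1 ∨ s = -1) (h : 1 ≤ s * z) : psiZ z = s := by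
  unfold psiZ
  rcases hs with rfl | rfl <;> omega

theorem card_filter_sub_card_filter_le_mul_sum_erase {ι : Type*} [DecidableEq ι]
    (N : Finset ι) (K : Set ι) [DecidablePred (· ∈ K)] (y : ι) {s : ℤ} (hs : s = 1 ∨ s = -1)
    {σ m : ι → ℤ} (hσ : ∀ u, σ u = 1 ∨ σ u = -1) (hK : ∀ u ∈ K, m u = σ u) (hm : ∀ u, |m u| ≤ 1) :
    ((N.filter (s * σ · = 1)).card : ℤ) - (N.filter (s * σ · = -1)).card
      - 2 * (N.filter (· ∉ K)).card - 1 ≤ s * ∑ u ∈ N.erase y, m u := by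
  let f : ι → ℤ := fun u => (if s * σ u = 1 then 1 else 0) - (if s * σ u = -1 then 1 else 0)
    - 2 * (if u ∉ K then 1 else 0)
  have hf : ∀ u, f u ≤ s * m u := by
    intro u
    have := abs_le.mp (hm u)
    by_cases hu : u ∈ K
    · rw [hK u hu]
      rcases hs with rfl | rfl <;> rcases hσ u with h | h <;> simp [f, h, hu]
    · rcases hs with rfl | rfl <;> rcases hσ u with h | h <;> simp [f, h, hu] <;> omega
  have hfy : f y ≤ 1 := by
    simp only [f]
    split_ifs <;> omega
  have hsumf : ∑ u ∈ N, f u = (N.filter (s * σ · = 1)).card - (N.filter (s * σ · = -1)).card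
      - 2 * (N.filter (· ∉ K)).card := by
    simp only [f, Finset.sum_sub_distrib, ← Finset.mul_sum, Finset.sum_boole]
  have hle : ∑ u ∈ N, f u - 1 ≤ ∑ u ∈ N.erase y, f u := by
    by_cases hy : y ∈ N
    · rw [Finset.sum_erase_eq_sub hy]
      omega
    · rw [Finset.erase_eq_of_notMem hy]
      omega
  rw [Finset.mul_sum, ← hsumf]
  exact hle.trans (Finset.sum_le_sum fun u _ => hf u)

variable {V : Type*} {G : SimpleGraph V} [∀ x, Fintype (G.neighborSet x)] {U : Set V}
  {σ : V → ℤ} {dp dm c : ℝ}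

theorem coreProp_coreSet : CoreProp G σ dp dm c (coreSet G σ dp dm c) := by
  rintro x ⟨U, hU, hxU⟩
  obtain ⟨h₁, h₂, h₃⟩ := hU x hxU
  exact ⟨h₁, h₂, (Set.ncard_le_ncard (Set.sdiff_subset_sdiff_right (Set.subset_sUnion_of_mem hU))
    (G.neighborSet x).toFinite.sdiff).trans h₃⟩

theorem ncard_setOf_adj_and (x : V) (p : V → Prop) [DecidablePred p] :
    {w | G.Adj x w ∧ p w}.ncard = ((G.neighborFinset x).filter p).card := by
  rw [← Set.ncard_coe_finset]
  congr 1
  ext w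
  simp

theorem abs_wpMsg_le (hσ : ∀ x, σ x = 1 ∨ σ x = -1) (t : ℕ) (x y : V) :
    |wpMsg G U σ t x y| ≤ 1 := by
  cases t with
  | zero =>
    simp only [wpMsg]
    split_ifs
    · rcases hσ x with h | h <;> simp [h]
    · simp
  | succ t => exact abs_psiZ_le _

/-- The margin is in fact at least `c √(d₊ ln d₊) / 2 - 201`, whence the constant `404`. -/
theorem one_le_card_filter_sub_card_filter_of_mem_coreSet
    (hgap : c * Real.sqrt (dp * Real.log dp) ≤ dp - dm)
    (hbig : 404 ≤ c * Real.sqrt (dp * Real.log dp)) {x : V} (hx : x ∈ coreSet G σ dp dm c) :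
    1 ≤ (((G.neighborFinset x).filter (σ x * σ · = 1)).card : ℤ)
      - ((G.neighborFinset x).filter (σ x * σ · = -1)).card
      - 2 * ((G.neighborFinset x).filter (· ∉ coreSet G σ dp dm c)).card - 1 := by
  obtain ⟨h₁, h₂, h₃⟩ := coreProp_coreSet x hx
  rw [ncard_setOf_adj_and] at h₁ h₂
  rw [show {w | G.Adj x w} \ coreSet G σ dp dm c = {w | G.Adj x w ∧ w ∉ coreSet G σ dp dm c}
    from rfl, ncard_setOf_adj_and] at h₃
  have h₃' : (((G.neighborFinset x).filter (· ∉ coreSet G σ dp dm c)).card : ℝ) ≤ 100 := by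
    exact_mod_cast h₃
  have : (1 : ℝ) ≤ ((G.neighborFinset x).filter (σ x * σ · = 1)).card
      - ((G.neighborFinset x).filter (σ x * σ · = -1)).card
      - 2 * ((G.neighborFinset x).filter (· ∉ coreSet G σ dp dm c)).card - 1 := by
    linarith [abs_le.mp h₁, abs_le.mp h₂]
  exact_mod_cast this

theorem wpMsg_eq_of_mem_coreSet (hσ : ∀ x, σ x = 1 ∨ σ x = -1)
    (hgap : c * Real.sqrt (dp * Real.log dp) ≤ dp - dm)
    (hbig : 404 ≤ c * Real.sqrt (dp * Real.log dp)) (t : ℕ) {x : V}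
    (hx : x ∈ coreSet G σ dp dm c) (y : V) : wpMsg G Set.univ σ t x y = σ x := by
  induction t generalizing x y with
  | zero => simp [wpMsg]
  | succ t ih =>
    rw [wpMsg]
    exact psiZ_eq_of_one_le_mul (hσ x)
      ((one_le_card_filter_sub_card_filter_of_mem_coreSet hgap hbig hx).trans
        (card_filter_sub_card_filter_le_mul_sum_erase _ _ y (hσ x) hσ (fun u hu => ih hu x)
          fun u => abs_wpMsg_le hσ t u x))

end CoreMessages

section LocalTree

open SimpleGraph

variable {V : Type*} {G : SimpleGraph V} {S K : Set V} {v w y : V}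

theorem restrictG_le : restrictG G S ≤ G := fun _ _ h => h.1

theorem isAcyclic_restrictG (h : (G.induce S).IsAcyclic) : (restrictG G S).IsAcyclic := by
  intro x c hc
  have hsupp : ∀ u ∈ (c.mapLe restrictG_le).support, u ∈ S := by
    intro u hu
    rw [Walk.support_mapLe_eq_support, Walk.mem_support_iff_exists_mem_edges_of_not_nil
      hc.not_nil] at hu
    obtain ⟨e, he, hue⟩ := hu
    induction e using Sym2.ind with
    | _ a b =>
      have hab := c.adj_of_mem_edges he
      rcases Sym2.mem_iff.mp hue with rfl | rfl
      exacts [hab.2.1, hab.2.2]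
  refine h (Walk.induce S _ hsupp) ?_
  rw [← Walk.isCycle_map_iff_of_injective (f := (Embedding.induce S).toHom)
    Subtype.val_injective, Walk.map_induce]
  exact hc.mapLe _

theorem reachable_restrictG (h : (G.induce S).Connected) {a b : V} (ha : a ∈ S) (hb : b ∈ S) :
    (restrictG G S).Reachable a b :=
  (h.preconnected ⟨a, ha⟩ ⟨b, hb⟩).map
    (⟨Subtype.val, fun {a b} h => ⟨h, a.2, b.2⟩⟩ : G.induce S →g restrictG G S)

theorem mem_CvSet_self : v ∈ CvSet G K v :=
  Set.mem_iUnion.mpr ⟨0, Or.inl rfl⟩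

theorem mem_CvSet_of_adj_root (h : G.Adj v y) : y ∈ CvSet G K v :=
  Set.mem_iUnion.mpr ⟨0, Or.inr h⟩

theorem mem_CvSet_of_adj (hw : w ∈ CvSet G K v) (hwK : w ∉ K) (h : G.Adj w y) :
    y ∈ CvSet G K v := by
  obtain ⟨t, ht⟩ := Set.mem_iUnion.mp hw
  exact Set.mem_iUnion.mpr ⟨t + 1, Or.inr (Set.mem_biUnion ⟨ht, hwK⟩ h)⟩

theorem CvStage_mono : Monotone (CvStage G K v) :=
  monotone_nat_of_le_succ fun _ => Set.subset_union_left

theorem isAcyclic_GvG (htree : (G.induce (CvSet G K v)).IsTree) : (GvG G K v).IsAcyclic :=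
  isAcyclic_restrictG htree.isAcyclic

theorem reachable_GvG (htree : (G.induce (CvSet G K v)).IsTree) (hw : w ∈ CvSet G K v) :
    (GvG G K v).Reachable w v :=
  reachable_restrictG htree.connected hw mem_CvSet_self

/-- Every vertex `y ≠ v` of `C_v^{(t)}` entered through a neighbour that is `v` or lies outside
the core; in the tree `G_v` that neighbour is the parent of `y` unless `y` is the parent of it, in
which case `y` was already in `C_v^{(t-1)}`. -/
theorem treeParent_mem_CvStage (htree : (G.induce (CvSet G K v)).IsTree) (t : ℕ)
    (hy : y ∈ CvStage G K v t) (hyv : y ≠ v) :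
    (GvG G K v).treeParent v y ∈ CvStage G K v t ∧
      ((GvG G K v).treeParent v y = v ∨ (GvG G K v).treeParent v y ∉ K) := by
  have hT := isAcyclic_GvG htree
  have of_adj_root : ∀ {y}, G.Adj v y → (GvG G K v).treeParent v y = v := fun h =>
    hT.treeParent_eq_of_adj ⟨h.symm, mem_CvSet_of_adj_root h, mem_CvSet_self⟩
  induction t generalizing y with
  | zero =>
    rcases hy with rfl | hy
    · exact absurd rfl hyv
    · rw [of_adj_root hy]
      exact ⟨Or.inl rfl, Or.inl rfl⟩
  | succ t ih =>
    rcases hy with hy | hy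
    · exact (ih hy hyv).imp_left (fun h => CvStage_mono t.le_succ h)
    obtain ⟨u, ⟨hu, huK⟩, huy⟩ := Set.mem_iUnion₂.mp hy
    by_cases huv : u = v
    · subst huv
      rw [of_adj_root huy]
      exact ⟨CvStage_mono (Nat.zero_le _) (Or.inl rfl), Or.inl rfl⟩
    have huC : u ∈ CvSet G K v := Set.mem_iUnion.mpr ⟨t, hu⟩
    rcases hT.eq_treeParent_or_isTreeChild (reachable_GvG htree huC) huv
        ⟨huy, huC, mem_CvSet_of_adj huC huK huy⟩ with rfl | hchild
    · exact (ih (ih hu huv).1 hyv).imp_left (fun h => CvStage_mono t.le_succ h)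
    · rw [hchild.treeParent_eq]
      exact ⟨CvStage_mono t.le_succ hu, Or.inr huK⟩

theorem eq_root_or_not_mem_of_isTreeChild (htree : (G.induce (CvSet G K v)).IsTree)
    (h : (GvG G K v).IsTreeChild v w y) : w = v ∨ w ∉ K := by
  obtain ⟨t, ht⟩ := Set.mem_iUnion.mp h.adj.2.2
  simpa [h.treeParent_eq] using (treeParent_mem_CvStage htree t ht h.ne_root).2

theorem finite_branch_GvG (hfin : (CvSet G K v).Finite) (hw : w ∈ CvSet G K v) :
    ((GvG G K v).branch v w).Finite :=
  hfin.subset (branch_subset (fun _ _ h => h.2.1) hw)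

theorem mem_erase_neighborFinset_iff_isTreeChild [∀ x, Fintype (G.neighborSet x)]
    (htree : (G.induce (CvSet G K v)).IsTree) (hw : w ∈ CvSet G K v) (hwv : w ≠ v)
    (hwK : w ∉ K) :
    y ∈ (G.neighborFinset w).erase (parentOf G K v w) ↔ (GvG G K v).IsTreeChild v w y := by
  rw [Finset.mem_erase, mem_neighborFinset]
  constructor
  · rintro ⟨hne, hadj⟩
    exact ((isAcyclic_GvG htree).eq_treeParent_or_isTreeChild (reachable_GvG htree hw) hwv
      ⟨hadj, hw, mem_CvSet_of_adj hw hwK hadj⟩).resolve_left hne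
  · intro h
    exact ⟨h.ne_treeParent (reachable_GvG htree hw) hwv, h.adj.1⟩

theorem parentOf_eq_treeParent : parentOf G K v w = (GvG G K v).treeParent v w := rfl

theorem hdir_lt_of_isTreeChild (htree : (G.induce (CvSet G K v)).IsTree)
    (hfin : (CvSet G K v).Finite) (hw : w ∈ CvSet G K v) (hwv : w ≠ v)
    (h : (GvG G K v).IsTreeChild v w y) : hdir G K v y < hdir G K v w :=
  (isAcyclic_GvG htree).hgt_deleteParentEdge_lt (reachable_GvG htree hw) hwv
    (finite_branch_GvG hfin hw) h

end LocalTree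

section WarningPropagation

open SimpleGraph

variable {V : Type*} {G : SimpleGraph V} [∀ x, Fintype (G.neighborSet x)] {K : Set V}
  {σ : V → ℤ} {v w y : V}

theorem wpMsg_eq_muStarDir (htree : (G.induce (CvSet G K v)).IsTree)
    (hfin : (CvSet G K v).Finite)
    (hfrozen : ∀ t x y, x ∈ K → wpMsg G Set.univ σ t x y = σ x)
    (hw : w ∈ CvSet G K v) (hwv : w ≠ v) {t : ℕ} (ht : hdir G K v w < t) :
    wpMsg G Set.univ σ t w (parentOf G K v w) = muStarDir G K σ v w := by
  induction hn : hdir G K v w using Nat.strong_induction_on generalizing w t with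
  | _ n ih =>
    by_cases hwK : w ∈ K
    · rw [muStarDir, hfrozen _ _ _ hwK, hfrozen _ _ _ hwK]
    have hchildren : ∀ t', n ≤ t' →
        ∑ y ∈ (G.neighborFinset w).erase (parentOf G K v w), wpMsg G Set.univ σ t' y w =
          ∑ y ∈ (G.neighborFinset w).erase (parentOf G K v w), muStarDir G K σ v y := by
      refine fun t' ht' => Finset.sum_congr rfl fun y hy => ?_
      have hy' := (mem_erase_neighborFinset_iff_isTreeChild htree hw hwv hwK).mp hy
      have hlt := hdir_lt_of_isTreeChild htree hfin hw hwv hy'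
      have := ih _ (hn ▸ hlt) hy'.adj.2.2 hy'.ne_root (t := t') (by omega) rfl
      rwa [parentOf_eq_treeParent, hy'.treeParent_eq] at this
    obtain ⟨t', rfl⟩ : ∃ t', t = t' + 1 := ⟨t - 1, by omega⟩
    rw [muStarDir, hn]
    simp only [wpMsg]
    rw [hchildren t' (by omega), hchildren n le_rfl]

theorem muStarDir_eq_psiZ_sum (htree : (G.induce (CvSet G K v)).IsTree)
    (hfin : (CvSet G K v).Finite)
    (hfrozen : ∀ t x y, x ∈ K → wpMsg G Set.univ σ t x y = σ x)
    (hw : w ∈ CvSet G K v) (hwv : w ≠ v) (hwK : w ∉ K) :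
    muStarDir G K σ v w =
      psiZ (∑ y ∈ (G.neighborFinset w).erase (parentOf G K v w), muStarDir G K σ v y) := by
  rw [muStarDir, wpMsg]
  refine congrArg psiZ (Finset.sum_congr rfl fun y hy => ?_)
  have hy' := (mem_erase_neighborFinset_iff_isTreeChild htree hw hwv hwK).mp hy
  have := wpMsg_eq_muStarDir htree hfin hfrozen hy'.adj.2.2 hy'.ne_root
    (hdir_lt_of_isTreeChild htree hfin hw hwv hy')
  rwa [parentOf_eq_treeParent, hy'.treeParent_eq] at this

theorem branchCut_neg_one_sub_branchCut_one (htree : (G.induce (CvSet G K v)).IsTree)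
    (hfin : (CvSet G K v).Finite) (hσ : ∀ x, σ x = 1 ∨ σ x = -1)
    (hfrozen : ∀ t x y, x ∈ K → wpMsg G Set.univ σ t x y = σ x)
    (hw : w ∈ CvSet G K v) (hwv : w ≠ v) (hwK : w ∉ K) :
    (branchCut (GvG G K v) K σ v w (-1) : ℤ) - branchCut (GvG G K v) K σ v w 1 =
      ∑ y ∈ (G.neighborFinset w).erase (parentOf G K v w), muStarDir G K σ v y := by
  induction hn : hdir G K v w using Nat.strong_induction_on generalizing w with
  | _ n ih =>
    have hs := fun y => mem_erase_neighborFinset_iff_isTreeChild (y := y) htree hw hwv hwK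
    have hdp := fun (a : ℤ) (ha : a = 1 ∨ a = -1) =>
      (isAcyclic_GvG htree).branchCut_eq_sum_childCost (K := K) (reachable_GvG htree hw) hwv
        (finite_branch_GvG hfin hw) hs hσ ha
    rw [hdp _ (Or.inr rfl), hdp _ (Or.inl rfl), Nat.cast_sum, Nat.cast_sum, ← Finset.sum_sub_distrib]
    refine Finset.sum_congr rfl fun y hy => ?_
    have hy' := (hs y).mp hy
    rw [childCost_neg_one_sub_childCost_one (hσ y)]
    split_ifs with hyK
    · rw [muStarDir, hfrozen _ _ _ hyK]
    · rw [ih _ (hn ▸ hdir_lt_of_isTreeChild htree hfin hw hwv hy') hy'.adj.2.2 hy'.ne_root hyK rfl,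
        muStarDir_eq_psiZ_sum htree hfin hfrozen hy'.adj.2.2 hy'.ne_root hyK]

end WarningPropagation

theorem sub_eq_abs_of_eq_psiZ {f : ℤ → ℤ} {S z : ℤ} (hf : f (-1) - f 1 = S) (hz : z = psiZ S)
    (hz₁ : z = 1 ∨ z = -1) : f (-z) - f z = |S| := by
  unfold psiZ at hz
  rcases hz₁ with rfl | rfl
  · rw [abs_of_pos (by omega)]
    exact hf
  · rw [abs_of_neg (by omega), neg_neg, ← hf]
    ring

theorem le_sqrt_mul_log {d : ℝ} (hd : 404 ^ 2 ≤ d) : 404 ≤ Real.sqrt (d * Real.log d) := by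
  have hlog : 1 ≤ Real.log d := by
    rw [Real.le_log_iff_exp_le (by positivity)]
    linarith [Real.exp_one_lt_d9]
  rw [Real.le_sqrt (by norm_num) (by positivity)]
  nlinarith

/-- Equation (opt 1) in the proof of Lemma 3.3: for `u ∈ C_v \ {v}` with `h_{u→v} ≥ 1`
and `z = μ*_{u→v} ∈ {±1}`,
`cut(G_{u→v}, σ^{-z}_{u→v}) - cut(G_{u→v}, σ^z_{u→v}) = |∑_{w∈∂u\{u_{↑v}}} μ*_{w→v}|`. -/
theorem cut_difference_formula :
    ∃ c : ℝ, 0 < c ∧ ∃ D : ℝ, ∀ dp dm : ℝ,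
    0 < dm → dm < dp → D ≤ dp → c * Real.sqrt (dp * Real.log dp) ≤ dp - dm →
    ∀ (V : Type*) (G : SimpleGraph V) [∀ v : V, Fintype (G.neighborSet v)] (σ : V → ℤ),
    (∀ x : V, σ x = 1 ∨ σ x = -1) →
    ∀ K : Set V, K = coreSet G σ dp dm c →
    ∀ v : V, (CvSet G K v).Finite → (G.induce (CvSet G K v)).IsTree →
    ∀ u ∈ CvSet G K v, u ≠ v → 1 ≤ hdir G K v u →
      ∀ z : ℤ, z = muStarDir G K σ v u → (z = 1 ∨ z = -1) →
        (cutW (Gdir G K v u) (Cdir G K v u ∩ ({u} ∪ K))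
            (fun x => if x = u then -z else σ x) : ℤ)
          - (cutW (Gdir G K v u) (Cdir G K v u ∩ ({u} ∪ K))
            (fun x => if x = u then z else σ x) : ℤ)
          = |∑ w ∈ (G.neighborFinset u).erase (parentOf G K v u), muStarDir G K σ v w| := by
  refine ⟨1, one_pos, 404 ^ 2, fun dp dm _ _ hD hgap V G _ σ hσ K hK v hfin htree u hu huv hh z
    hz hz₁ => ?_⟩
  have hfrozen : ∀ t x y, x ∈ K → wpMsg G Set.univ σ t x y = σ x := fun t x y hx =>
    wpMsg_eq_of_mem_coreSet hσ hgap (by simpa using le_sqrt_mul_log hD) t (hK ▸ hx) y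
  have huK : u ∉ K := fun huK => by
    obtain ⟨y, hy⟩ := (isAcyclic_GvG htree).exists_isTreeChild_of_hgt_pos
      (reachable_GvG htree hu) huv hh
    exact (eq_root_or_not_mem_of_isTreeChild htree hy).elim huv (· huK)
  exact sub_eq_abs_of_eq_psiZ (f := fun a => (branchCut (GvG G K v) K σ v u a : ℤ))
    (branchCut_neg_one_sub_branchCut_one htree hfin hσ hfrozen hu huv huK)
    (hz.trans (muStarDir_eq_psiZ_sum htree hfin hfrozen hu huv huK)) hz₁
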